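/- arXiv:1306.6107 — 10 statements merged into one kernel-verified Lean document; each statement's English description precedes it below -/
import Mathlib

section
/- Let Λ and Γ be row-finite k-graphs with no sources and let p : Λ → Γ be a surjective k-graph morphism with r-path lifting. If Γ is aperiodic, then Λ is aperiodic. -/
/-- A `k`-graph: a countable category `Λ` (objects `Obj`, morphisms `Mor`, range `r`,
source `s`, identities `ident`, partial composition `comp`) together with a degree
functor `d : Λ → ℕᵏ` satisfying the unique factorisation property. -/
structure KGraph (k : ℕ) where
  Obj : Type
  Mor : Type
  countObj : Countable Obj
  countMor : Countable Mor
  r : Mor → Obj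
  s : Mor → Obj
  ident : Obj → Mor
  comp : (f g : Mor) → s f = r g → Mor
  d : Mor → Fin k → ℕ
  r_ident : ∀ v, r (ident v) = v
  s_ident : ∀ v, s (ident v) = v
  d_ident : ∀ v, d (ident v) = 0
  r_comp : ∀ f g h, r (comp f g h) = r f
  s_comp : ∀ f g h, s (comp f g h) = s g
  d_comp : ∀ f g h, d (comp f g h) = d f + d g
  ident_comp : ∀ (f : Mor) (h : s (ident (r f)) = r f), comp (ident (r f)) f h = f
  comp_ident : ∀ (f : Mor) (h : s f = r (ident (s f))), comp f (ident (s f)) h = f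
  assoc : ∀ (f g e : Mor) (hfg : s f = r g) (hge : s g = r e)
      (h1 : s (comp f g hfg) = r e) (h2 : s f = r (comp g e hge)),
      comp (comp f g hfg) e h1 = comp f (comp g e hge) h2
  factor : ∀ (f : Mor) (m n : Fin k → ℕ), d f = m + n →
      ∃! p : Mor × Mor, d p.1 = m ∧ ∃ h : s p.1 = r p.2, comp p.1 p.2 h = f

namespace KGraph

variable {k : ℕ}

private lemma pi_add_tsub {a b : Fin k → ℕ} (h : a ≤ b) : a + (b - a) = b := by
  funext i
  have hi : a i ≤ b i := h i
  simp only [Pi.add_apply, Pi.sub_apply]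
  omega

/-- For `m ≤ n ≤ d f`, `Λ.seg f m n` is the unique factor `f(m,n)` of degree `n - m`
following an initial segment of degree `m` (junk value `f` otherwise). -/
noncomputable def seg (Λ : KGraph k) (f : Λ.Mor) (m n : Fin k → ℕ) : Λ.Mor :=
  letI := Classical.dec (m ≤ n ∧ n ≤ Λ.d f)
  if h : m ≤ n ∧ n ≤ Λ.d f then
    (Λ.factor (Λ.factor f n (Λ.d f - n) (pi_add_tsub h.2).symm).choose.1
        m (n - m)
        (by
          rw [(Λ.factor f n (Λ.d f - n) (pi_add_tsub h.2).symm).choose_spec.1.1]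
          exact (pi_add_tsub h.1).symm)).choose.2
  else f

/-- `Λ` is row-finite: `vΛⁿ` is finite for every vertex `v` and `n ∈ ℕᵏ`. -/
def RowFinite (Λ : KGraph k) : Prop :=
  ∀ (v : Λ.Obj) (n : Fin k → ℕ), {f : Λ.Mor | Λ.r f = v ∧ Λ.d f = n}.Finite

/-- `Λ` has no sources: `vΛⁿ ≠ ∅` for every vertex `v` and `n ∈ ℕᵏ`. -/
def NoSources (Λ : KGraph k) : Prop :=
  ∀ (v : Λ.Obj) (n : Fin k → ℕ), ∃ f : Λ.Mor, Λ.r f = v ∧ Λ.d f = n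

/-- `Λ` has no sinks: `Λⁿv ≠ ∅` for every vertex `v` and nonzero `n ∈ ℕᵏ`. -/
def NoSinks (Λ : KGraph k) : Prop :=
  ∀ (v : Λ.Obj) (n : Fin k → ℕ), n ≠ 0 → ∃ f : Λ.Mor, Λ.s f = v ∧ Λ.d f = n

/-- `Λ` is cofinal: for all vertices `v, w` there is `N ∈ ℕᵏ` with `vΛs(α) ≠ ∅`
for every `α ∈ wΛ^N`. -/
def Cofinal (Λ : KGraph k) : Prop :=
  ∀ v w : Λ.Obj, ∃ N : Fin k → ℕ, ∀ α, Λ.r α = w → Λ.d α = N →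
    ∃ β, Λ.r β = v ∧ Λ.s β = Λ.s α

/-- `Λ` is strongly connected: for all vertices `u, v` there is `N > 0` with
`uΛ^N v ≠ ∅`. -/
def StronglyConnected (Λ : KGraph k) : Prop :=
  ∀ u v : Λ.Obj, ∃ N : Fin k → ℕ, 0 < N ∧ ∃ f, Λ.r f = u ∧ Λ.s f = v ∧ Λ.d f = N

/-- `Λ` has no local periodicity at `v`. -/
def NoLocalPeriodicity (Λ : KGraph k) (v : Λ.Obj) : Prop :=
  ∀ m n : Fin k → ℕ, m ≠ n → ∃ f, Λ.r f = v ∧ m ⊔ n ≤ Λ.d f ∧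
    Λ.seg f m (m + Λ.d f - (m ⊔ n)) ≠ Λ.seg f n (n + Λ.d f - (m ⊔ n))

/-- `Λ` is aperiodic: no local periodicity at every vertex. -/
def Aperiodic (Λ : KGraph k) : Prop := ∀ v : Λ.Obj, Λ.NoLocalPeriodicity v

/-- `V(n,v)`: sources of paths `λ ∈ vΛ^m` with `m ≤ n`. -/
def Vset (Λ : KGraph k) (n : Fin k → ℕ) (v : Λ.Obj) : Set Λ.Obj :=
  {w | ∃ f : Λ.Mor, Λ.r f = v ∧ Λ.s f = w ∧ Λ.d f ≤ n}

/-- `FV(n,v) = V(n,v) \ ⋃_{i : nᵢ ≥ 1} V(n - eᵢ, v)`. -/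
def FVset (Λ : KGraph k) (n : Fin k → ℕ) (v : Λ.Obj) : Set Λ.Obj :=
  Λ.Vset n v \ ⋃ (i : Fin k) (_ : 1 ≤ n i), Λ.Vset (n - Pi.single i 1) v

/-- The edge relation of the 1-skeleton `E_Λ`: an edge from `v` to `u`
(i.e. a morphism of degree `eᵢ` with range `u` and source `v`). -/
def SkelStep (Λ : KGraph k) (u v : Λ.Obj) : Prop :=
  ∃ (f : Λ.Mor) (i : Fin k), Λ.d f = Pi.single i 1 ∧ Λ.r f = u ∧ Λ.s f = v

/-- The 1-skeleton `E_Λ` is strongly connected: for all vertices `u, v` there is a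
directed path of length `n ≥ 1` from `v` to `u` in `E_Λ`. -/
def SkeletonStronglyConnected (Λ : KGraph k) : Prop :=
  ∀ u v : Λ.Obj, Relation.TransGen Λ.SkelStep u v

/-- The system `(Λ, S, η)` is cofinal. -/
def SystemCofinal (Λ : KGraph k) {S : Type} [Monoid S] (η : Λ.Mor → S) : Prop :=
  ∀ (v w : Λ.Obj) (a b : S), ∃ N : Fin k → ℕ, ∀ α, Λ.r α = w → Λ.d α = N →
    ∃ β, Λ.r β = v ∧ Λ.s β = Λ.s α ∧ a * η β = b * η α

/-- `η : Λ → S` is upper dense: for all `w ∈ Λ⁰`, `a b ∈ S` there is `N ∈ ℕᵏ` such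
that `b·η(α) ≥ₗ a` for every `α ∈ wΛ^N`. -/
def UpperDense (Λ : KGraph k) {S : Type} [Monoid S] (η : Λ.Mor → S) : Prop :=
  ∀ (w : Λ.Obj) (a b : S), ∃ N : Fin k → ℕ, ∀ α, Λ.r α = w → Λ.d α = N →
    ∃ u : S, b * η α = a * u

/-- `t ∈ S` is strictly positive: `{tⁿ : n ≥ 0}` is cofinal in `(S, ≥ₗ)`. -/
def StrictlyPositive {S : Type} [Monoid S] (t : S) : Prop :=
  ∀ s : S, ∃ (n : ℕ) (u : S), t ^ n = s * u

/-- `η` is `S`-primitive for `Λ`: there is a strictly positive `t ∈ S` such that for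
all vertices `v, w` and every `s ≥ₗ t` we have `vη⁻¹(s)w ≠ ∅`. -/
def SPrimitive (Λ : KGraph k) {S : Type} [Monoid S] (η : Λ.Mor → S) : Prop :=
  ∃ t : S, StrictlyPositive t ∧ ∀ (v w : Λ.Obj) (s : S), (∃ u, s = t * u) →
    ∃ f, Λ.r f = v ∧ Λ.s f = w ∧ η f = s

/-- The skew product `k`-graph `Λ ×_η S` of `Λ` by a functor `η : Λ → S`. -/
noncomputable def skewProduct (Λ : KGraph k) (S : Type) [Monoid S] [Countable S]
    (η : Λ.Mor → S) (η_ident : ∀ v, η (Λ.ident v) = 1)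
    (η_comp : ∀ f g h, η (Λ.comp f g h) = η f * η g) : KGraph k where
  Obj := Λ.Obj × S
  Mor := Λ.Mor × S
  countObj := by have := Λ.countObj; exact inferInstance
  countMor := by have := Λ.countMor; exact inferInstance
  r := fun p => (Λ.r p.1, p.2)
  s := fun p => (Λ.s p.1, p.2 * η p.1)
  ident := fun v => (Λ.ident v.1, v.2)
  comp := fun p q h => (Λ.comp p.1 q.1 (congrArg Prod.fst h), p.2)
  d := fun p => Λ.d p.1
  r_ident := fun v => by simp [Λ.r_ident]
  s_ident := fun v => by simp [Λ.s_ident, η_ident]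
  d_ident := fun v => Λ.d_ident v.1
  r_comp := fun f g h => by simp [Λ.r_comp]
  s_comp := fun f g h => by
    have h2 : f.2 * η f.1 = g.2 := congrArg Prod.snd h
    simp only [Λ.s_comp, η_comp, ← mul_assoc, h2]
  d_comp := fun f g h => Λ.d_comp f.1 g.1 (congrArg Prod.fst h)
  ident_comp := fun f h => by
    obtain ⟨f1, f2⟩ := f
    exact Prod.ext (Λ.ident_comp f1 _) rfl
  comp_ident := fun f h => by
    obtain ⟨f1, f2⟩ := f
    exact Prod.ext (Λ.comp_ident f1 _) rfl
  assoc := fun f g e hfg hge h1 h2 =>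
    Prod.ext (Λ.assoc f.1 g.1 e.1 (congrArg Prod.fst hfg) (congrArg Prod.fst hge)
      (congrArg Prod.fst h1) (congrArg Prod.fst h2)) rfl
  factor := by
    rintro ⟨f, t⟩ m n hd
    obtain ⟨⟨μ, ν⟩, ⟨hdμ, hsr, hcomp⟩, huniq⟩ := Λ.factor f m n hd
    refine ⟨((μ, t), (ν, t * η μ)), ⟨hdμ, ?_, ?_⟩, ?_⟩
    · show (Λ.s μ, t * η μ) = (Λ.r ν, t * η μ)
      rw [hsr]
    · exact Prod.ext hcomp rfl
    · rintro ⟨⟨μ', t'⟩, ⟨ν', u'⟩⟩ ⟨hdμ', h', hcomp'⟩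
      have hpair := huniq (μ', ν') ⟨hdμ', congrArg Prod.fst h', congrArg Prod.fst hcomp'⟩
      have hmu : μ' = μ := congrArg Prod.fst hpair
      have hnu : ν' = ν := congrArg Prod.snd hpair
      have ht : t' = t := congrArg Prod.snd hcomp'
      have hu : u' = t' * η μ' := (congrArg Prod.snd h').symm
      subst hmu hnu ht
      simp [hu]

/-- The degree functor viewed as a functor into the (multiplicatively written)
group `ℤᵏ`. -/
noncomputable def dZ (Λ : KGraph k) (f : Λ.Mor) : Multiplicative (Fin k → ℤ) :=
  Multiplicative.ofAdd fun i => (Λ.d f i : ℤ)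

lemma dZ_ident (Λ : KGraph k) (v : Λ.Obj) : Λ.dZ (Λ.ident v) = 1 := by
  simp only [dZ, Λ.d_ident]
  rfl

lemma dZ_comp (Λ : KGraph k) (f g : Λ.Mor) (h : Λ.s f = Λ.r g) :
    Λ.dZ (Λ.comp f g h) = Λ.dZ f * Λ.dZ g := by
  simp only [dZ, Λ.d_comp]
  rw [← ofAdd_add]
  congr 1

/-- The skew product graph `Λ ×_d ℤᵏ` (with `ℤᵏ` written multiplicatively). -/
noncomputable def skewZ (Λ : KGraph k) : KGraph k :=
  letI : Countable (Multiplicative (Fin k → ℤ)) := inferInstanceAs (Countable (Fin k → ℤ))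
  Λ.skewProduct (Multiplicative (Fin k → ℤ)) Λ.dZ Λ.dZ_ident Λ.dZ_comp

end KGraph

/-- A monoid `S` is left-reversible if `sS ∩ tS ≠ ∅` for all `s, t ∈ S`. -/
def LeftReversible (S : Type) [Monoid S] : Prop :=
  ∀ s t : S, ∃ x y : S, s * x = t * y

/-- A `k`-graph morphism: a degree-preserving functor between `k`-graphs. -/
structure KGraphHom {k : ℕ} (Λ Γ : KGraph k) where
  obj : Λ.Obj → Γ.Obj
  mor : Λ.Mor → Γ.Mor
  map_r : ∀ f, Γ.r (mor f) = obj (Λ.r f)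
  map_s : ∀ f, Γ.s (mor f) = obj (Λ.s f)
  map_d : ∀ f, Γ.d (mor f) = Λ.d f
  map_ident : ∀ v, mor (Λ.ident v) = Γ.ident (obj v)
  map_comp : ∀ f g (h : Λ.s f = Λ.r g) (h' : Γ.s (mor f) = Γ.r (mor g)),
    mor (Λ.comp f g h) = Γ.comp (mor f) (mor g) h'

/-- `p` has `r`-path lifting: for every vertex `v` of `Λ` and every `λ ∈ p(v)Γ`
there is `λ' ∈ vΛ` with `p(λ') = λ`. -/
def KGraphHom.RPathLifting {k : ℕ} {Λ Γ : KGraph k} (p : KGraphHom Λ Γ) : Prop :=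
  ∀ (v : Λ.Obj) (g : Γ.Mor), Γ.r g = p.obj v → ∃ f, Λ.r f = v ∧ p.mor f = g

/-!
A degree-preserving functor carries factorisations to factorisations, so by uniqueness of
factorisation it commutes with taking segments: `p (λ(m, n)) = (p λ)(m, n)`. A path witnessing
aperiodicity at `p(v)` lifts to a path at `v` of the same degree, and two segments of the lift
that coincide would have coinciding images.
-/

namespace KGraphHom

variable {k : ℕ} {Λ Γ : KGraph k} (p : KGraphHom Λ Γ)

lemma map_factor_choose (f : Λ.Mor) (m n : Fin k → ℕ) (h : Λ.d f = m + n)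
    (h' : Γ.d (p.mor f) = m + n) :
    (Γ.factor (p.mor f) m n h').choose =
      (p.mor (Λ.factor f m n h).choose.1, p.mor (Λ.factor f m n h).choose.2) := by
  obtain ⟨hd, hs, hc⟩ := (Λ.factor f m n h).choose_spec.1
  have hs' : Γ.s (p.mor (Λ.factor f m n h).choose.1) =
      Γ.r (p.mor (Λ.factor f m n h).choose.2) := by
    rw [p.map_s, p.map_r, hs]
  exact ((Γ.factor (p.mor f) m n h').choose_spec.2 _
    ⟨(p.map_d _).trans hd, hs', by rw [← p.map_comp _ _ hs hs', hc]⟩).symm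

lemma map_seg (f : Λ.Mor) (m n : Fin k → ℕ) : p.mor (Λ.seg f m n) = Γ.seg (p.mor f) m n := by
  have hd := p.map_d f
  unfold KGraph.seg
  by_cases h : m ≤ n ∧ n ≤ Λ.d f
  · have h' : m ≤ n ∧ n ≤ Γ.d (p.mor f) := by rw [hd]; exact h
    rw [dif_pos h, dif_pos h']
    have e1 : Λ.d f = n + (Λ.d f - n) := (KGraph.pi_add_tsub h.2).symm
    have key := p.map_factor_choose f n (Λ.d f - n) e1 (hd ▸ e1)
    have e2 : Λ.d (Λ.factor f n (Λ.d f - n) e1).choose.1 = m + (n - m) := by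
      rw [(Λ.factor f n (Λ.d f - n) e1).choose_spec.1.1]
      exact (KGraph.pi_add_tsub h.1).symm
    simp only [congrArg Prod.fst key]
    rw [p.map_factor_choose _ m (n - m) e2 ((p.map_d _).trans e2)]
  · have h' : ¬(m ≤ n ∧ n ≤ Γ.d (p.mor f)) := by rw [hd]; exact h
    rw [dif_neg h, dif_neg h']

theorem noLocalPeriodicity_of_rPathLifting (hlift : p.RPathLifting) {v : Λ.Obj}
    (hv : Γ.NoLocalPeriodicity (p.obj v)) : Λ.NoLocalPeriodicity v := by
  intro m n hmn
  obtain ⟨g, hrg, hle, hne⟩ := hv m n hmn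
  obtain ⟨f, hrf, rfl⟩ := hlift v g hrg
  rw [p.map_d] at hle hne
  refine ⟨f, hrf, hle, fun heq => hne ?_⟩
  rw [← p.map_seg, ← p.map_seg, heq]

end KGraphHom

theorem aperiodic_of_rPathLifting_general {k : ℕ} (Λ Γ : KGraph k)
    (p : KGraphHom Λ Γ) (hlift : p.RPathLifting)
    (hap : Γ.Aperiodic) : Λ.Aperiodic :=
  fun v => p.noLocalPeriodicity_of_rPathLifting hlift (hap (p.obj v))

/-- if `p : Λ → Γ` is a surjective `k`-graph morphism with `r`-path
lifting and `Γ` is aperiodic, then `Λ` is aperiodic. -/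
theorem aperiodic_of_rPathLifting {k : ℕ} (Λ Γ : KGraph k)
    (hΛrf : Λ.RowFinite) (hΛns : Λ.NoSources) (hΓrf : Γ.RowFinite) (hΓns : Γ.NoSources)
    (p : KGraphHom Λ Γ) (hobj : Function.Surjective p.obj)
    (hmor : Function.Surjective p.mor) (hlift : p.RPathLifting)
    (hap : Γ.Aperiodic) : Λ.Aperiodic :=
  aperiodic_of_rPathLifting_general Λ Γ p hlift hap
end

section
/- Let Λ be a row-finite k-graph with no sources, S a countable cancellative monoid, and η : Λ → S a functor. If Λ is aperiodic, then the skew product k-graph Λ ×_η S is aperiodic. -/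
/-! The projection `(λ, t) ↦ λ` from `Λ ×_η S` to `Λ` is a degree-preserving functor, and
every path of `Λ` starting at `v` lifts to one starting at `(v, t)`. Degree-preserving functors
commute with taking segments `λ(m, n)`, so a path witnessing no local periodicity at `v` lifts to a
witness at `(v, t)`: two equal segments upstairs would project to two equal segments downstairs. -/

namespace KGraph

variable {k : ℕ} (Λ : KGraph k)

lemma seg_of_not_le {f : Λ.Mor} {m n : Fin k → ℕ} (h : ¬(m ≤ n ∧ n ≤ Λ.d f)) :
    Λ.seg f m n = f :=
  dif_neg h

lemma factor_choose_eq {g α β : Λ.Mor} {m n : Fin k → ℕ} (h : Λ.d g = m + n)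
    (hα : Λ.d α = m) (hαβ : Λ.s α = Λ.r β) (hg : Λ.comp α β hαβ = g) :
    (Λ.factor g m n h).choose = (α, β) :=
  ((Λ.factor g m n h).choose_spec.2 (α, β) ⟨hα, hαβ, hg⟩).symm

lemma exists_comp_comp_eq {f : Λ.Mor} {m n : Fin k → ℕ} (hmn : m ≤ n) (hnd : n ≤ Λ.d f) :
    ∃ (α β γ : Λ.Mor) (hαβ : Λ.s α = Λ.r β) (hγ : Λ.s (Λ.comp α β hαβ) = Λ.r γ),
      Λ.d α = m ∧ Λ.d β = n - m ∧ Λ.comp (Λ.comp α β hαβ) γ hγ = f := by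
  obtain ⟨⟨μ, γ⟩, ⟨hμ, hμγ, hf⟩, -⟩ :=
    Λ.factor f n (Λ.d f - n) (add_tsub_cancel_of_le hnd).symm
  obtain ⟨⟨α, β⟩, ⟨hα, hαβ, rfl⟩, -⟩ :=
    Λ.factor μ m (n - m) (by rw [hμ, add_tsub_cancel_of_le hmn])
  have hβ : Λ.d β = n - m := by
    rw [← hμ, Λ.d_comp, hα, add_tsub_cancel_left]
  exact ⟨α, β, γ, hαβ, hμγ, hα, hβ, hf⟩

lemma seg_eq_of_comp_comp_eq {f α β γ : Λ.Mor} {m n : Fin k → ℕ} (hmn : m ≤ n)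
    (hα : Λ.d α = m) (hβ : Λ.d β = n - m) (hαβ : Λ.s α = Λ.r β)
    (hγ : Λ.s (Λ.comp α β hαβ) = Λ.r γ) (hf : Λ.comp (Λ.comp α β hαβ) γ hγ = f) :
    Λ.seg f m n = β := by
  have hαβ_d : Λ.d (Λ.comp α β hαβ) = n := by
    rw [Λ.d_comp, hα, hβ, add_tsub_cancel_of_le hmn]
  have hnd : n ≤ Λ.d f := by
    rw [← hf, Λ.d_comp, hαβ_d]
    exact le_self_add
  unfold seg
  rw [dif_pos ⟨hmn, hnd⟩]
  have hfirst : (Λ.factor f n (Λ.d f - n) (add_tsub_cancel_of_le hnd).symm).choose.1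
      = Λ.comp α β hαβ :=
    congrArg Prod.fst (Λ.factor_choose_eq (add_tsub_cancel_of_le hnd).symm hαβ_d hγ hf)
  exact congrArg Prod.snd
    (Λ.factor_choose_eq (by rw [hfirst, Λ.d_comp, hα, hβ]) hα hαβ hfirst.symm)

end KGraph

namespace KGraphHom

variable {k : ℕ} {Λ Γ : KGraph k} (p : KGraphHom Λ Γ)

theorem aperiodic_of_rPathLifting (hp : p.RPathLifting) (hΓ : Γ.Aperiodic) : Λ.Aperiodic := by
  intro w m n hmn
  obtain ⟨f, hf, hd, hne⟩ := hΓ (p.obj w) m n hmn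
  obtain ⟨g, hg, rfl⟩ := hp w f hf
  refine ⟨g, hg, by rwa [p.map_d] at hd, fun heq => hne ?_⟩
  rw [p.map_d, ← p.map_seg, ← p.map_seg, heq]

end KGraphHom

namespace KGraph

variable {k : ℕ} (Λ : KGraph k) (S : Type) [Monoid S] [Countable S] (η : Λ.Mor → S)
  (hη1 : ∀ v, η (Λ.ident v) = 1) (hη2 : ∀ f g h, η (Λ.comp f g h) = η f * η g)

def skewProductFst : KGraphHom (Λ.skewProduct S η hη1 hη2) Λ where
  obj := Prod.fst
  mor := Prod.fst
  map_r _ := rfl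
  map_s _ := rfl
  map_d _ := rfl
  map_ident _ := rfl
  map_comp _ _ _ _ := rfl

lemma skewProductFst_rPathLifting : (Λ.skewProductFst S η hη1 hη2).RPathLifting :=
  fun v f hf => ⟨(f, v.2), Prod.ext hf rfl, rfl⟩

end KGraph

theorem skewProduct_aperiodic_of_aperiodic_general {k : ℕ} (Λ : KGraph k)
    (S : Type) [CancelMonoid S] [Countable S]
    (η : Λ.Mor → S) (hη1 : ∀ v, η (Λ.ident v) = 1)
    (hη2 : ∀ f g h, η (Λ.comp f g h) = η f * η g) (hap : Λ.Aperiodic) :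
    (Λ.skewProduct S η hη1 hη2).Aperiodic :=
  (Λ.skewProductFst S η hη1 hη2).aperiodic_of_rPathLifting
    (Λ.skewProductFst_rPathLifting S η hη1 hη2) hap

/-- if `Λ` is aperiodic then the skew product `Λ ×_η S` is aperiodic. -/
theorem skewProduct_aperiodic_of_aperiodic {k : ℕ} (Λ : KGraph k)
    (hrf : Λ.RowFinite) (hns : Λ.NoSources) (S : Type) [CancelMonoid S] [Countable S]
    (η : Λ.Mor → S) (hη1 : ∀ v, η (Λ.ident v) = 1)
    (hη2 : ∀ f g h, η (Λ.comp f g h) = η f * η g) (hap : Λ.Aperiodic) :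
    (Λ.skewProduct S η hη1 hη2).Aperiodic :=
  skewProduct_aperiodic_of_aperiodic_general Λ S η hη1 hη2 hap
end

section
/- Suppose S is a countable cancellative monoid, Λ is a row-finite k-graph with no sources, η : Λ → S is a functor, and there exists a map φ : S → ℤ^k such that d = φ ∘ η (that is, φ(η(λ)) = d(λ) for every λ ∈ Λ). Then the skew product k-graph Λ ×_η S is aperiodic. -/
/-!
Two paths `(λ, t)` and `(μ, t)` of `Λ ×_η S` with a common range and a common source satisfy
`t η(λ) = t η(μ)`, so `η(λ) = η(μ)` by cancellation and `d(λ) = φ(η(λ)) = d(μ)`: in the skew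
product the endpoints of a path determine its degree. For a path `λ` of degree `m ∨ n` the
segments `λ(m, m)` and `λ(n, n)` are the sources of its initial segments of degrees `m` and `n`,
which have the same range; so they differ when `m ≠ n`.
-/

namespace KGraph

variable {k : ℕ}

lemma seg_comp_self (Γ : KGraph k) (g g' : Γ.Mor) (h : Γ.s g = Γ.r g') :
    Γ.seg (Γ.comp g g' h) (Γ.d g) (Γ.d g) = Γ.ident (Γ.s g) := by
  have hle : Γ.d g ≤ Γ.d (Γ.comp g g' h) := by
    rw [Γ.d_comp]
    exact le_self_add
  unfold seg
  rw [dif_pos ⟨le_rfl, hle⟩]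
  generalize_proofs hf hg
  have hf_eq : hf.choose = (g, g') :=
    (hf.choose_spec.2 (g, g') ⟨rfl, h, rfl⟩).symm
  have hg_eq : hg.choose = (hf.choose.1, Γ.ident (Γ.s hf.choose.1)) :=
    (hg.choose_spec.2 (hf.choose.1, Γ.ident (Γ.s hf.choose.1))
      ⟨hf.choose_spec.1.1, (Γ.r_ident _).symm, Γ.comp_ident _ _⟩).symm
  rw [hg_eq, hf_eq]

lemma aperiodic_of_degree_eq_of_endpoints_eq (Γ : KGraph k) (hns : Γ.NoSources)
    (hdeg : ∀ g p, Γ.r g = Γ.r p → Γ.s g = Γ.s p → Γ.d g = Γ.d p) : Γ.Aperiodic := by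
  intro v m n hmn
  obtain ⟨f, hrf, hdf⟩ := hns v (m ⊔ n)
  refine ⟨f, hrf, hdf.ge, ?_⟩
  rw [hdf, add_tsub_cancel_right, add_tsub_cancel_right]
  have factor_at : ∀ a ≤ Γ.d f, ∃ g g' h, Γ.d g = a ∧ Γ.comp g g' h = f := fun a ha =>
    let ⟨⟨g, g'⟩, ⟨hg, h, hc⟩, _⟩ :=
      Γ.factor f a (Γ.d f - a) (add_tsub_cancel_of_le ha).symm
    ⟨g, g', h, hg, hc⟩
  obtain ⟨g, g', hgg', rfl, hg⟩ := factor_at m (hdf ▸ le_sup_left)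
  obtain ⟨p, p', hpp', rfl, hp⟩ := factor_at n (hdf ▸ le_sup_right)
  have hrg : Γ.r g = Γ.r f := hg ▸ (Γ.r_comp g g' hgg').symm
  have hrp : Γ.r p = Γ.r f := hp ▸ (Γ.r_comp p p' hpp').symm
  intro hseg
  rw [← hg, seg_comp_self, hg, ← hp, seg_comp_self] at hseg
  have hs : Γ.s g = Γ.s p := by simpa only [Γ.r_ident] using congrArg Γ.r hseg
  exact hmn (hdeg g p (hrg.trans hrp.symm) hs)

section SkewProduct

variable (Λ : KGraph k) (S : Type) [Countable S]

lemma noSources_skewProduct [Monoid S] (η : Λ.Mor → S) (hη1 : ∀ v, η (Λ.ident v) = 1)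
    (hη2 : ∀ f g h, η (Λ.comp f g h) = η f * η g) (hns : Λ.NoSources) :
    (Λ.skewProduct S η hη1 hη2).NoSources := fun v n =>
  let ⟨f, hr, hd⟩ := hns v.1 n
  ⟨(f, v.2), Prod.ext hr rfl, hd⟩

lemma skewProduct_degree_eq_of_endpoints_eq [LeftCancelMonoid S] (η : Λ.Mor → S)
    (hη1 : ∀ v, η (Λ.ident v) = 1) (hη2 : ∀ f g h, η (Λ.comp f g h) = η f * η g)
    (φ : S → Fin k → ℤ) (hφ : ∀ f : Λ.Mor, φ (η f) = fun i => (Λ.d f i : ℤ))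
    (g p : (Λ.skewProduct S η hη1 hη2).Mor)
    (hr : (Λ.skewProduct S η hη1 hη2).r g = (Λ.skewProduct S η hη1 hη2).r p)
    (hs : (Λ.skewProduct S η hη1 hη2).s g = (Λ.skewProduct S η hη1 hη2).s p) :
    (Λ.skewProduct S η hη1 hη2).d g = (Λ.skewProduct S η hη1 hη2).d p := by
  obtain ⟨g, t⟩ := g
  obtain ⟨p, t'⟩ := p
  obtain rfl : t = t' := congrArg Prod.snd hr
  have hη : η g = η p := mul_left_cancel (congrArg Prod.snd hs)
  funext i
  exact_mod_cast congrFun ((hφ g).symm.trans (hη ▸ hφ p)) i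

end SkewProduct

end KGraph

theorem skewProduct_aperiodic_of_degree_factors_general {k : ℕ} (Λ : KGraph k)
    (hns : Λ.NoSources) (S : Type) [CancelMonoid S] [Countable S]
    (η : Λ.Mor → S) (hη1 : ∀ v, η (Λ.ident v) = 1)
    (hη2 : ∀ f g h, η (Λ.comp f g h) = η f * η g)
    (φ : S → Fin k → ℤ) (hφ : ∀ f : Λ.Mor, φ (η f) = fun i => (Λ.d f i : ℤ)) :
    (Λ.skewProduct S η hη1 hη2).Aperiodic :=
  KGraph.aperiodic_of_degree_eq_of_endpoints_eq _
    (KGraph.noSources_skewProduct Λ S η hη1 hη2 hns)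
    (KGraph.skewProduct_degree_eq_of_endpoints_eq Λ S η hη1 hη2 φ hφ)

/-- if there is `φ : S → ℤᵏ` with `d = φ ∘ η`, then the skew product
`Λ ×_η S` is aperiodic. -/
theorem skewProduct_aperiodic_of_degree_factors {k : ℕ} (Λ : KGraph k)
    (hrf : Λ.RowFinite) (hns : Λ.NoSources) (S : Type) [CancelMonoid S] [Countable S]
    (η : Λ.Mor → S) (hη1 : ∀ v, η (Λ.ident v) = 1)
    (hη2 : ∀ f g h, η (Λ.comp f g h) = η f * η g)
    (φ : S → Fin k → ℤ) (hφ : ∀ f : Λ.Mor, φ (η f) = fun i => (Λ.d f i : ℤ)) :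
    (Λ.skewProduct S η hη1 hη2).Aperiodic :=
  skewProduct_aperiodic_of_degree_factors_general Λ hns S η hη1 hη2 φ hφ
end

section
/- Let Λ be a row-finite k-graph with no sources. Then Λ is strongly connected if and only if its 1-skeleton E_Λ is strongly connected. -/
namespace KGraph

variable {k : ℕ} (Λ : KGraph k)

theorem eq_ident_of_d_eq_zero {g : Λ.Mor} (hg : Λ.d g = 0) : g = Λ.ident (Λ.r g) := by
  obtain ⟨_, _, huniq⟩ := Λ.factor g 0 0 (by simp [hg])
  have hleft := huniq (Λ.ident (Λ.r g), g) ⟨Λ.d_ident _, Λ.s_ident _, Λ.ident_comp g _⟩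
  have hright := huniq (g, Λ.ident (Λ.s g)) ⟨hg, (Λ.r_ident _).symm, Λ.comp_ident g _⟩
  exact (congrArg Prod.fst (hleft.trans hright.symm)).symm

theorem s_eq_r_of_d_eq_zero {g : Λ.Mor} (hg : Λ.d g = 0) : Λ.s g = Λ.r g := by
  rw [Λ.eq_ident_of_d_eq_zero hg, Λ.s_ident, Λ.r_ident]

theorem exists_comp_eq_of_d_pos (f : Λ.Mor) {i : Fin k} (hi : 0 < Λ.d f i) :
    ∃ (μ ν : Λ.Mor) (h : Λ.s μ = Λ.r ν), Λ.comp μ ν h = f ∧ Λ.d μ = Pi.single i 1 := by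
  have hle : Pi.single i 1 ≤ Λ.d f := fun j => by
    rcases eq_or_ne j i with rfl | hj
    · simpa using Nat.one_le_iff_ne_zero.mpr hi.ne'
    · simp [hj]
  obtain ⟨⟨μ, ν⟩, ⟨hμ, h, hcomp⟩, -⟩ :=
    Λ.factor f (Pi.single i 1) (Λ.d f - Pi.single i 1) (add_tsub_cancel_of_le hle).symm
  exact ⟨μ, ν, h, hcomp, hμ⟩

theorem transGen_skelStep_of_d_pos {f : Λ.Mor} (hf : 0 < Λ.d f) :
    Relation.TransGen Λ.SkelStep (Λ.r f) (Λ.s f) := by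
  induction hn : Λ.d f using WellFoundedLT.induction generalizing f with
  | _ n ih =>
    obtain ⟨i, hi⟩ := (Pi.lt_def.mp hf).2
    obtain ⟨μ, ν, h, rfl, hμ⟩ := Λ.exists_comp_eq_of_d_pos f hi
    rw [Λ.r_comp, Λ.s_comp]
    have hstep : Λ.SkelStep (Λ.r μ) (Λ.r ν) := ⟨μ, i, hμ, rfl, h⟩
    rcases eq_zero_or_pos (Λ.d ν) with hν | hν
    · rw [Λ.s_eq_r_of_d_eq_zero hν]
      exact .single hstep
    · have hlt : Λ.d ν < n := by
        rw [← hn, Λ.d_comp, hμ]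
        exact lt_add_of_pos_left _ (Pi.single_pos.mpr one_pos)
      exact .head hstep (ih _ hlt hν rfl)

theorem exists_d_pos_of_transGen_skelStep {u v : Λ.Obj}
    (h : Relation.TransGen Λ.SkelStep u v) : ∃ f, Λ.r f = u ∧ Λ.s f = v ∧ 0 < Λ.d f := by
  induction h with
  | single hstep =>
    obtain ⟨f, i, hd, hr, hs⟩ := hstep
    exact ⟨f, hr, hs, hd ▸ Pi.single_pos.mpr one_pos⟩
  | tail _ hstep ih =>
    obtain ⟨f, hr, hs, hd⟩ := ih
    obtain ⟨g, -, -, hrg, hsg⟩ := hstep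
    refine ⟨Λ.comp f g (hs.trans hrg.symm), by rw [Λ.r_comp, hr], by rw [Λ.s_comp, hsg], ?_⟩
    rw [Λ.d_comp]
    exact add_pos_of_pos_of_nonneg hd zero_le

end KGraph

theorem stronglyConnected_iff_skeleton_stronglyConnected_general {k : ℕ} (Λ : KGraph k) :
    Λ.StronglyConnected ↔ Λ.SkeletonStronglyConnected := by
  constructor
  · intro hsc u v
    obtain ⟨N, hN, f, rfl, rfl, rfl⟩ := hsc u v
    exact Λ.transGen_skelStep_of_d_pos hN
  · intro hsk u v
    obtain ⟨f, hr, hs, hd⟩ := Λ.exists_d_pos_of_transGen_skelStep (hsk u v)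
    exact ⟨Λ.d f, hd, f, hr, hs, rfl⟩

/-- `Λ` is strongly connected iff its 1-skeleton `E_Λ` is strongly
connected. -/
theorem stronglyConnected_iff_skeleton_stronglyConnected {k : ℕ} (Λ : KGraph k)
    (hrf : Λ.RowFinite) (hns : Λ.NoSources) :
    Λ.StronglyConnected ↔ Λ.SkeletonStronglyConnected :=
  stronglyConnected_iff_skeleton_stronglyConnected_general Λ
end

section
/- Let Λ and Γ be row-finite k-graphs with no sources and let p : Λ → Γ be a surjective k-graph morphism with r-path lifting. If Λ is cofinal, then Γ is cofinal. -/
theorem cofinal_of_rPathLifting_general {k : ℕ} (Λ Γ : KGraph k)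
    (p : KGraphHom Λ Γ) (hobj : Function.Surjective p.obj) (hlift : p.RPathLifting)
    (hcof : Λ.Cofinal) : Γ.Cofinal := by
  intro v w
  obtain ⟨v', rfl⟩ := hobj v
  obtain ⟨w', rfl⟩ := hobj w
  obtain ⟨N, hN⟩ := hcof v' w'
  refine ⟨N, fun α hα hdα => ?_⟩
  -- Lift `α` to `w'Λ^N`, connect its source to `v'` in `Λ`, and push the connecting path down.
  obtain ⟨α', hrα', rfl⟩ := hlift w' α hα
  obtain ⟨β', hrβ', hsβ'⟩ := hN α' hrα' (by rw [← p.map_d, hdα])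
  exact ⟨p.mor β', by rw [p.map_r, hrβ'], by rw [p.map_s, p.map_s, hsβ']⟩

/-- if `p : Λ → Γ` is a surjective `k`-graph morphism with `r`-path
lifting and `Λ` is cofinal, then `Γ` is cofinal. -/
theorem cofinal_of_rPathLifting {k : ℕ} (Λ Γ : KGraph k)
    (hΛrf : Λ.RowFinite) (hΛns : Λ.NoSources) (hΓrf : Γ.RowFinite) (hΓns : Γ.NoSources)
    (p : KGraphHom Λ Γ) (hobj : Function.Surjective p.obj)
    (hmor : Function.Surjective p.mor) (hlift : p.RPathLifting)
    (hcof : Λ.Cofinal) : Γ.Cofinal :=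
  cofinal_of_rPathLifting_general Λ Γ p hobj hlift hcof
end

section
/- Let Λ be a row-finite k-graph with no sources, S a countable cancellative monoid, and η : Λ → S a functor. Then the system (Λ, S, η) is cofinal if and only if the skew product k-graph Λ ×_η S is cofinal. -/
namespace KGraph

variable {k : ℕ} (Λ : KGraph k) {S : Type} [Monoid S] [Countable S] (η : Λ.Mor → S)
  (hη1 : ∀ v, η (Λ.ident v) = 1) (hη2 : ∀ f g h, η (Λ.comp f g h) = η f * η g)

@[simp]
lemma skewProduct_s (β : Λ.Mor) (t : S) :
    (Λ.skewProduct S η hη1 hη2).s (β, t) = (Λ.s β, t * η β) := rfl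

lemma skewProduct_exists_path_iff (v u : Λ.Obj) (a c : S) :
    (∃ β, (Λ.skewProduct S η hη1 hη2).r β = (v, a) ∧
        (Λ.skewProduct S η hη1 hη2).s β = (u, c)) ↔
      ∃ β, Λ.r β = v ∧ Λ.s β = u ∧ a * η β = c := by
  constructor
  · rintro ⟨⟨β, t⟩, hr, hs⟩
    obtain ⟨rfl, rfl⟩ := Prod.mk.inj hr
    obtain ⟨hsβ, hη⟩ := Prod.mk.inj hs
    exact ⟨β, rfl, hsβ, hη⟩
  · rintro ⟨β, rfl, rfl, rfl⟩
    exact ⟨(β, a), rfl, rfl⟩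

lemma skewProduct_forall_path_iff (w : Λ.Obj) (b : S) (N : Fin k → ℕ)
    (P : (Λ.skewProduct S η hη1 hη2).Mor → Prop) :
    (∀ α, (Λ.skewProduct S η hη1 hη2).r α = (w, b) →
        (Λ.skewProduct S η hη1 hη2).d α = N → P α) ↔
      ∀ α, Λ.r α = w → Λ.d α = N → P (α, b) := by
  constructor
  · rintro h α rfl hd
    exact h (α, b) rfl hd
  · rintro h ⟨α, t⟩ hr hd
    obtain ⟨rfl, rfl⟩ := Prod.mk.inj hr
    exact h α rfl hd

lemma skewProduct_forall_sources_reachable_iff (v w : Λ.Obj) (a b : S) (N : Fin k → ℕ) :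
    (∀ α, (Λ.skewProduct S η hη1 hη2).r α = (w, b) → (Λ.skewProduct S η hη1 hη2).d α = N →
        ∃ β, (Λ.skewProduct S η hη1 hη2).r β = (v, a) ∧
          (Λ.skewProduct S η hη1 hη2).s β = (Λ.skewProduct S η hη1 hη2).s α) ↔
      ∀ α, Λ.r α = w → Λ.d α = N → ∃ β, Λ.r β = v ∧ Λ.s β = Λ.s α ∧ a * η β = b * η α := by
  rw [skewProduct_forall_path_iff]
  simp only [skewProduct_s, skewProduct_exists_path_iff]

end KGraph

theorem systemCofinal_iff_skewProduct_cofinal_general {k : ℕ} (Λ : KGraph k)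
    (S : Type) [CancelMonoid S] [Countable S]
    (η : Λ.Mor → S) (hη1 : ∀ v, η (Λ.ident v) = 1)
    (hη2 : ∀ f g h, η (Λ.comp f g h) = η f * η g) :
    Λ.SystemCofinal η ↔ (Λ.skewProduct S η hη1 hη2).Cofinal := by
  constructor
  · rintro h ⟨v, a⟩ ⟨w, b⟩
    obtain ⟨N, hN⟩ := h v w a b
    exact ⟨N, (Λ.skewProduct_forall_sources_reachable_iff η hη1 hη2 v w a b N).2 hN⟩
  · intro h v w a b
    obtain ⟨N, hN⟩ := h (v, a) (w, b)
    exact ⟨N, (Λ.skewProduct_forall_sources_reachable_iff η hη1 hη2 v w a b N).1 hN⟩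

/-- the system `(Λ, S, η)` is cofinal iff the skew product `Λ ×_η S`
is cofinal. -/
theorem systemCofinal_iff_skewProduct_cofinal {k : ℕ} (Λ : KGraph k)
    (hrf : Λ.RowFinite) (hns : Λ.NoSources) (S : Type) [CancelMonoid S] [Countable S]
    (η : Λ.Mor → S) (hη1 : ∀ v, η (Λ.ident v) = 1)
    (hη2 : ∀ f g h, η (Λ.comp f g h) = η f * η g) :
    Λ.SystemCofinal η ↔ (Λ.skewProduct S η hη1 hη2).Cofinal :=
  systemCofinal_iff_skewProduct_cofinal_general Λ S η hη1 hη2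
end

section
/- Let Λ be a k-graph with no sources, S a left-reversible countable cancellative monoid, and η : Λ → S a functor. If η is S-primitive for Λ and upper dense, then the system (Λ, S, η) is cofinal. -/
/-- Upper density applied to `a * t` writes `b η(α) = a t u`; primitivity realises `t u` as `η(β)`
for some `β ∈ vΛs(α)`. -/
theorem KGraph.SPrimitive.systemCofinal {k : ℕ} {Λ : KGraph k} {S : Type} [Monoid S]
    {η : Λ.Mor → S} (hprim : Λ.SPrimitive η) (hud : Λ.UpperDense η) : Λ.SystemCofinal η := by
  obtain ⟨t, -, hrealise⟩ := hprim
  intro v w a b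
  obtain ⟨N, hN⟩ := hud w (a * t) b
  refine ⟨N, fun α hα_r hα_d => ?_⟩
  obtain ⟨u, hu⟩ := hN α hα_r hα_d
  obtain ⟨β, hβ_r, hβ_s, hβ_η⟩ := hrealise v (Λ.s α) (t * u) ⟨u, rfl⟩
  exact ⟨β, hβ_r, hβ_s, by rw [hβ_η, ← mul_assoc, hu]⟩

theorem systemCofinal_of_sPrimitive_upperDense_general {k : ℕ} (Λ : KGraph k)
    (S : Type) [CancelMonoid S] (η : Λ.Mor → S)
    (hprim : Λ.SPrimitive η) (hud : Λ.UpperDense η) : Λ.SystemCofinal η :=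
  hprim.systemCofinal hud

/-- if `η` is `S`-primitive for `Λ` and upper dense, then the system
`(Λ, S, η)` is cofinal. -/
theorem systemCofinal_of_sPrimitive_upperDense {k : ℕ} (Λ : KGraph k)
    (hns : Λ.NoSources) (S : Type) [CancelMonoid S] [Countable S]
    (hrev : LeftReversible S) (η : Λ.Mor → S) (hη1 : ∀ v, η (Λ.ident v) = 1)
    (hη2 : ∀ f g h, η (Λ.comp f g h) = η f * η g)
    (hprim : Λ.SPrimitive η) (hud : Λ.UpperDense η) : Λ.SystemCofinal η :=
  systemCofinal_of_sPrimitive_upperDense_general Λ S η hprim hud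
end

section
/- Let Λ be a row-finite k-graph such that the degree functor d is ℕ^k-primitive for Λ, i.e. Λ is primitive: there exists N > 0 in ℕ^k such that uΛ^M v ≠ ∅ for all vertices u, v and all M ≥ N. Then the system (Λ, ℕ^k, d) is cofinal: for all vertices v, w and all a, b ∈ ℕ^k there exists N' ∈ ℕ^k such that for every α ∈ wΛ^{N'} there exists β ∈ vΛs(α) with a + d(β) = b + d(α). -/
theorem systemCofinal_of_primitive_general {k : ℕ} (Λ : KGraph k)
    (hprim : ∃ N : Fin k → ℕ, 0 < N ∧ ∀ (u v : Λ.Obj) (M : Fin k → ℕ), N ≤ M →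
      ∃ f, Λ.r f = u ∧ Λ.s f = v ∧ Λ.d f = M) :
    ∀ (v w : Λ.Obj) (a b : Fin k → ℕ), ∃ N' : Fin k → ℕ,
      ∀ α, Λ.r α = w → Λ.d α = N' →
        ∃ β, Λ.r β = v ∧ Λ.s β = Λ.s α ∧ a + Λ.d β = b + Λ.d α := by
  obtain ⟨N, -, hN⟩ := hprim
  intro v w a b
  refine ⟨N + a, fun α _ hα => ?_⟩
  obtain ⟨β, hrβ, hsβ, hβ⟩ := hN v (Λ.s α) (N + b) le_self_add
  exact ⟨β, hrβ, hsβ, by rw [hβ, hα]; abel⟩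

/-- if `Λ` is primitive (the degree functor is `ℕᵏ`-primitive) then the
system `(Λ, ℕᵏ, d)` is cofinal. -/
theorem systemCofinal_of_primitive {k : ℕ} (Λ : KGraph k) (hrf : Λ.RowFinite)
    (hprim : ∃ N : Fin k → ℕ, 0 < N ∧ ∀ (u v : Λ.Obj) (M : Fin k → ℕ), N ≤ M →
      ∃ f, Λ.r f = u ∧ Λ.s f = v ∧ Λ.d f = M) :
    ∀ (v w : Λ.Obj) (a b : Fin k → ℕ), ∃ N' : Fin k → ℕ,
      ∀ α, Λ.r α = w → Λ.d α = N' →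
        ∃ β, Λ.r β = v ∧ Λ.s β = Λ.s α ∧ a + Λ.d β = b + Λ.d α :=
  systemCofinal_of_primitive_general Λ hprim
end

section
/- Let Λ be a row-finite k-graph with no sources, G a countable discrete group, and η : Λ → G a functor. If the system (Λ, G, η) is cofinal, then Γ(η) = G. -/
namespace KGraph

variable {k : ℕ}

theorem exists_eq_mul_inv_of_systemCofinal (Λ : KGraph k) (hns : Λ.NoSources)
    {G : Type} [Group G] {η : Λ.Mor → G} (hcof : Λ.SystemCofinal η) (v : Λ.Obj) (g : G) :
    ∃ lam mu : Λ.Mor, Λ.s lam = Λ.s mu ∧ g = η lam * (η mu)⁻¹ := by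
  obtain ⟨N, hN⟩ := hcof v v 1 g
  obtain ⟨α, hrα, hdα⟩ := hns v N
  obtain ⟨β, -, hsβ, hβ⟩ := hN α hrα hdα
  refine ⟨β, α, hsβ, ?_⟩
  rw [one_mul] at hβ
  rw [hβ, mul_inv_cancel_right]

end KGraph

theorem gammaEta_eq_univ_of_systemCofinal_general {k : ℕ} (Λ : KGraph k)
    (hns : Λ.NoSources) (hne : Nonempty Λ.Obj)
    (G : Type) [Group G] (η : Λ.Mor → G)
    (hcof : Λ.SystemCofinal η) :
    {g : G | ∃ lam mu : Λ.Mor, Λ.s lam = Λ.s mu ∧ g = η lam * (η mu)⁻¹} =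
      Set.univ :=
  Set.eq_univ_of_forall fun g => Λ.exists_eq_mul_inv_of_systemCofinal hns hcof hne.some g

/-- if the system `(Λ, G, η)` is cofinal then
`Γ(η) = {η(λ)η(μ)⁻¹ : s(λ) = s(μ)}` is all of `G`. -/
theorem gammaEta_eq_univ_of_systemCofinal {k : ℕ} (Λ : KGraph k)
    (hrf : Λ.RowFinite) (hns : Λ.NoSources) (hne : Nonempty Λ.Obj)
    (G : Type) [Group G] [Countable G] (η : Λ.Mor → G)
    (hη1 : ∀ v, η (Λ.ident v) = 1) (hη2 : ∀ f g h, η (Λ.comp f g h) = η f * η g)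
    (hcof : Λ.SystemCofinal η) :
    {g : G | ∃ lam mu : Λ.Mor, Λ.s lam = Λ.s mu ∧ g = η lam * (η mu)⁻¹} =
      Set.univ :=
  gammaEta_eq_univ_of_systemCofinal_general Λ hns hne G η hcof
end

section
/- Let Λ be a row-finite k-graph with no sources, v a vertex, and n ∈ ℕ^k. Then V(n,v) is finite, and if V(n,v) = V(n − e_i, v) for some 1 ≤ i ≤ k with n_i ≥ 1, then V(n + r e_i, v) = V(n − e_i, v) for all r ≥ 0. -/
namespace KGraph

variable {k : ℕ} (Λ : KGraph k)

/-- Splitting at `d f ⊓ a` puts the excess of `d f` over `a` into the second factor. -/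
lemma exists_comp_eq_of_d_le_add {f : Λ.Mor} {a b : Fin k → ℕ} (hf : Λ.d f ≤ a + b) :
    ∃ (g h : Λ.Mor) (hgh : Λ.s g = Λ.r h), Λ.comp g h hgh = f ∧ Λ.d g ≤ a ∧ Λ.d h ≤ b := by
  have hsplit : Λ.d f = Λ.d f ⊓ a + (Λ.d f - Λ.d f ⊓ a) := by
    funext t
    simp only [Pi.add_apply, Pi.sub_apply, Pi.inf_apply]
    omega
  obtain ⟨⟨g, h⟩, ⟨hg, hgh, hf_eq⟩, -⟩ := Λ.factor f _ _ hsplit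
  dsimp only at hg hgh hf_eq
  refine ⟨g, h, hgh, hf_eq, hg ▸ inf_le_right, fun t => show Λ.d h t ≤ b t from ?_⟩
  have hd := congrFun (Λ.d_comp g h hgh) t
  have hft : Λ.d f t ≤ a t + b t := hf t
  rw [hf_eq] at hd
  simp only [Pi.add_apply, hg, Pi.inf_apply] at hd
  omega

lemma mem_Vset_add_iff {a b : Fin k → ℕ} {v w : Λ.Obj} :
    w ∈ Λ.Vset (a + b) v ↔ ∃ u ∈ Λ.Vset a v, w ∈ Λ.Vset b u := by
  constructor
  · rintro ⟨f, rfl, rfl, hf⟩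
    obtain ⟨g, h, hgh, rfl, hg, hh⟩ := Λ.exists_comp_eq_of_d_le_add hf
    exact ⟨Λ.s g, ⟨g, (Λ.r_comp g h hgh).symm, rfl, hg⟩,
      h, hgh.symm, (Λ.s_comp g h hgh).symm, hh⟩
  · rintro ⟨u, ⟨g, rfl, rfl, hg⟩, h, hgh, rfl, hh⟩
    refine ⟨Λ.comp g h hgh.symm, Λ.r_comp _ _ _, Λ.s_comp _ _ _, ?_⟩
    rw [Λ.d_comp]
    exact add_le_add hg hh

lemma Vset_add_congr {a a' : Fin k → ℕ} {v : Λ.Obj} (h : Λ.Vset a v = Λ.Vset a' v)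
    (b : Fin k → ℕ) : Λ.Vset (a + b) v = Λ.Vset (a' + b) v := by
  ext w
  simp only [mem_Vset_add_iff, h]

lemma Vset_add_nsmul_eq {p b : Fin k → ℕ} {v : Λ.Obj} (h : Λ.Vset (p + b) v = Λ.Vset p v)
    (j : ℕ) : Λ.Vset (p + j • b) v = Λ.Vset p v := by
  induction j with
  | zero => rw [zero_nsmul, add_zero]
  | succ j ih => rw [succ_nsmul, ← add_assoc, Λ.Vset_add_congr ih, h]

lemma Vset_eq_image (n : Fin k → ℕ) (v : Λ.Obj) :
    Λ.Vset n v = Λ.s '' {f | Λ.r f = v ∧ Λ.d f ≤ n} := by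
  ext w
  constructor
  · rintro ⟨f, hr, rfl, hd⟩
    exact ⟨f, ⟨hr, hd⟩, rfl⟩
  · rintro ⟨f, ⟨hr, hd⟩, rfl⟩
    exact ⟨f, hr, rfl, hd⟩

lemma Vset_finite (hrf : Λ.RowFinite) (n : Fin k → ℕ) (v : Λ.Obj) :
    (Λ.Vset n v).Finite := by
  rw [Vset_eq_image]
  have hpaths : {f | Λ.r f = v ∧ Λ.d f ≤ n} ⊆ ⋃ m ∈ Set.Iic n, {f | Λ.r f = v ∧ Λ.d f = m} := by
    rintro f ⟨hr, hd⟩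
    exact Set.mem_biUnion (x := Λ.d f) hd ⟨hr, rfl⟩
  exact (((Set.finite_Iic n).biUnion fun m _ => hrf v m).subset hpaths).image _

end KGraph

theorem Vset_finite_and_stabilizes_general {k : ℕ} (Λ : KGraph k)
    (hrf : Λ.RowFinite) (v : Λ.Obj) (n : Fin k → ℕ) :
    (Λ.Vset n v).Finite ∧
    ∀ i : Fin k, 1 ≤ n i → Λ.Vset n v = Λ.Vset (n - Pi.single i 1) v →
      ∀ r : ℕ, Λ.Vset (n + r • Pi.single i 1) v = Λ.Vset (n - Pi.single i 1) v := by
  refine ⟨Λ.Vset_finite hrf n v, fun i hi hstable r => ?_⟩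
  have hn : n - Pi.single i 1 + Pi.single i 1 = n := by
    funext t
    by_cases ht : t = i
    · subst ht; simp only [Pi.add_apply, Pi.sub_apply, Pi.single_eq_same]; omega
    · simp [ht]
  have hr : n + r • Pi.single i 1 = n - Pi.single i 1 + (r + 1) • Pi.single i 1 := by
    rw [succ_nsmul, add_comm (r • _), ← add_assoc, hn]
  rw [hr]
  exact Λ.Vset_add_nsmul_eq (by rw [hn]; exact hstable) (r + 1)

/-- `V(n,v)` is finite, and if `V(n,v) = V(n - eᵢ, v)` then
`V(n + r·eᵢ, v) = V(n - eᵢ, v)` for all `r ≥ 0`. -/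
theorem Vset_finite_and_stabilizes {k : ℕ} (Λ : KGraph k)
    (hrf : Λ.RowFinite) (hns : Λ.NoSources) (v : Λ.Obj) (n : Fin k → ℕ) :
    (Λ.Vset n v).Finite ∧
    ∀ i : Fin k, 1 ≤ n i → Λ.Vset n v = Λ.Vset (n - Pi.single i 1) v →
      ∀ r : ℕ, Λ.Vset (n + r • Pi.single i 1) v = Λ.Vset (n - Pi.single i 1) v :=
  Vset_finite_and_stabilizes_general Λ hrf v n
end
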